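/- Let G be a finite group of order p^k for a prime p, and let N be a normal subgroup of G of order p^a such that N contains exactly one non-central G-conjugacy class. Then p = 2, N is abelian, and a ≤ (k+1)/2. -/

import Mathlib

/-!
The non-central part `N \ Z(G)` of `N` is a single class `x^G`, so
`|N| = |N ∩ Z(G)| + |x^G|` is a sum of two powers of `p`. This forces `p = 2` and
`|x^G| = |N ∩ Z(G)| = |N| / 2`. A central subgroup of index two makes `N` abelian, so
`N ≤ C_G(x)`, and `|x^G| · |N|` divides `|x^G| · |C_G(x)| = |G|`, i.e. `2a - 1 ≤ k`.
-/

theorem Nat.Prime.eq_two_of_pow_eq_pow_add_pow {p a b c : ℕ} (hp : p.Prime)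
    (h : p ^ a = p ^ b + p ^ c) : p = 2 ∧ b = c ∧ a = b + 1 := by
  wlog hbc : b ≤ c generalizing b c
  · obtain ⟨hp2, hcb, ha⟩ := this (h.trans (add_comm _ _)) (by omega)
    exact ⟨hp2, hcb.symm, by omega⟩
  obtain ⟨d, rfl⟩ := Nat.exists_eq_add_of_le hbc
  have hfactor : p ^ a = p ^ b * (1 + p ^ d) := by rw [h, pow_add]; ring
  obtain ⟨i, -, hi⟩ := (Nat.dvd_prime_pow hp).mp (Dvd.intro_left _ hfactor.symm)
  have hd : d = 0 := by
    by_contra hd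
    have hi0 : i ≠ 0 := by
      rintro rfl
      simp [hp.ne_zero] at hi
    have hp1 : p ∣ 1 := (Nat.dvd_add_left (dvd_pow_self p hd)).mp (hi ▸ dvd_pow_self p hi0)
    exact hp.one_lt.ne' (Nat.dvd_one.mp hp1)
  subst hd
  obtain ⟨rfl, rfl⟩ := Nat.prime_two.pow_eq_iff.mp hi.symm
  refine ⟨rfl, rfl, Nat.pow_right_injective le_rfl ?_⟩
  simpa [pow_succ, mul_two] using hfactor

namespace Subgroup

variable {G : Type*} [Group G]

def noncentralConjClasses (N : Subgroup G) : Set (Set G) :=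
  {C | ∃ x : G, x ∈ N ∧ x ∉ center G ∧ C = conjugatesOf x}

theorem conjugatesOf_subset_sdiff_center {N : Subgroup G} [N.Normal] {x : G} (hxN : x ∈ N)
    (hxZ : x ∉ center G) : conjugatesOf x ⊆ (N : Set G) \ center G := fun _ hy =>
  ⟨Group.conjugates_subset_normal hxN hy,
    fun hyZ => hxZ (hy.eq_of_right_mem_center hyZ ▸ hyZ)⟩

theorem exists_sdiff_center_eq_conjugatesOf {N : Subgroup G} [N.Normal]
    (h : N.noncentralConjClasses.ncard = 1) :
    ∃ x ∈ N, (N : Set G) \ center G = conjugatesOf x := by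
  obtain ⟨C, hC⟩ := Set.ncard_eq_one.mp h
  obtain ⟨x, hxN, hxZ, rfl⟩ : C ∈ N.noncentralConjClasses := hC ▸ rfl
  refine ⟨x, hxN, (conjugatesOf_subset_sdiff_center hxN hxZ).antisymm' fun y hy => ?_⟩
  have hy' : conjugatesOf y ∈ N.noncentralConjClasses := ⟨y, hy.1, hy.2, rfl⟩
  rw [hC, Set.mem_singleton_iff] at hy'
  exact hy' ▸ mem_conjugatesOf_self

theorem card_inf_add_ncard_sdiff (H K : Subgroup G) [Finite K] :
    Nat.card (H ⊓ K : Subgroup G) + ((K : Set G) \ H).ncard = Nat.card K := by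
  have h := Set.ncard_inter_add_ncard_sdiff_eq_ncard (K : Set G) H (Set.toFinite _)
  rwa [Set.inter_comm, ← coe_inf, ← Nat.card_coe_set_eq,
    ← Nat.card_coe_set_eq (K : Set G)] at h

theorem card_inf_mul_relIndex (H K : Subgroup G) :
    Nat.card (H ⊓ K : Subgroup G) * H.relIndex K = Nat.card K := by
  rw [← inf_relIndex_right, ← relIndex_bot_left, ← relIndex_bot_left,
    relIndex_mul_relIndex _ _ _ bot_le inf_le_right]

theorem ncard_conjugatesOf_mul_card_centralizer (x : G) :
    (conjugatesOf x).ncard * Nat.card (centralizer {x}) = Nat.card G := by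
  have horbit : MulAction.orbit (ConjAct G) x = conjugatesOf x := by
    ext y
    exact ConjAct.mem_orbit_conjAct.trans isConj_comm
  rw [← horbit, ← MulAction.index_stabilizer, nat_card_centralizer_nat_card_stabilizer]
  exact index_mul_card _

theorem commute_of_relIndex_center_eq_two {N : Subgroup G} (h : (center G).relIndex N = 2)
    {x y : G} (hx : x ∈ N) (hy : y ∈ N) : Commute x y := by
  by_cases hxZ : x ∈ center G
  · exact (mem_center_iff.mp hxZ y).symm
  by_cases hyZ : y ∈ center G
  · exact mem_center_iff.mp hyZ x
  -- `x⁻¹` and `y` both lie outside the index-two subgroup, so their product lies inside it.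
  have hxy : x⁻¹ * y ∈ center G := by
    have h' := mul_mem_iff_of_index_two h (a := ⟨x⁻¹, inv_mem hx⟩) (b := ⟨y, hy⟩)
    simpa only [mem_subgroupOf, coe_mul, inv_mem_iff, hxZ, hyZ, iff_true] using h'
  simpa using (Commute.refl x).mul_right (mem_center_iff.mp hxy x)

end Subgroup

open Subgroup in
/-- **Theorem 3.1.3.** Let `|G| = p^k` with `p` prime and let `N ⊴ G` with
`|N| = p^a` contain exactly one non-central `G`-conjugacy class. Then `p = 2`, `N` is
abelian, and `a ≤ (k+1)/2`. -/
theorem prime_power_group_one_noncentral_class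
    {G : Type*} [Group G] [Finite G] (p k a : ℕ) (hp : p.Prime)
    (hG : Nat.card G = p ^ k) (N : Subgroup G) (hN : N.Normal)
    (hNcard : Nat.card N = p ^ a)
    (hcl : {C : Set G | ∃ x : G, x ∈ N ∧ x ∉ Subgroup.center G ∧ C = conjugatesOf x}.ncard = 1) :
    p = 2 ∧ (∀ x ∈ N, ∀ y ∈ N, Commute x y) ∧ (a : ℚ) ≤ (k + 1) / 2 := by
  obtain ⟨x, hxN, hclass⟩ := exists_sdiff_center_eq_conjugatesOf (N := N) hcl
  have hclass_mul := ncard_conjugatesOf_mul_card_centralizer x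
  obtain ⟨b, -, hb⟩ := (Nat.dvd_prime_pow hp).mp
    (hNcard ▸ card_dvd_of_le inf_le_right : Nat.card (center G ⊓ N : Subgroup G) ∣ p ^ a)
  obtain ⟨c, -, hc⟩ := (Nat.dvd_prime_pow hp).mp
    (hG ▸ Dvd.intro _ hclass_mul : (conjugatesOf x).ncard ∣ p ^ k)
  have hsum : p ^ a = p ^ b + p ^ c := by
    rw [← hNcard, ← card_inf_add_ncard_sdiff (center G) N, hb, hclass, hc]
  obtain ⟨rfl, rfl, rfl⟩ := hp.eq_two_of_pow_eq_pow_add_pow hsum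
  have hindex : (center G).relIndex N = 2 := by
    have h := card_inf_mul_relIndex (center G) N
    rw [hb, hNcard, pow_succ] at h
    exact Nat.eq_of_mul_eq_mul_left (by positivity) h
  have hcomm : ∀ x ∈ N, ∀ y ∈ N, Commute x y := fun _ hx _ hy =>
    commute_of_relIndex_center_eq_two hindex hx hy
  refine ⟨rfl, hcomm, ?_⟩
  have hN_le : N ≤ centralizer {x} := fun y hy =>
    mem_centralizer_singleton_iff.mpr (hcomm y hy x hxN)
  have hdvd : 2 ^ b * 2 ^ (b + 1) ∣ 2 ^ k := by
    rw [← hG, ← hclass_mul, hc, ← hNcard]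
    exact mul_dvd_mul_left _ (card_dvd_of_le hN_le)
  rw [← pow_add, Nat.pow_dvd_pow_iff_le_right one_lt_two] at hdvd
  rw [le_div_iff₀ two_pos]
  exact_mod_cast (by omega : (b + 1) * 2 ≤ k + 1)
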